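/- The linear substitution map sending the basis monomial ∏_{k=1}^{N-1} σ_k^{j_k} (with σ_k^0 replaced by ∑_{j=0}^{d_k} σ_k(s_{kj}) and σ_k^j by σ_k(s_{kj}) for j ≥ 1) is a linear isomorphism between the two real vector spaces of dimension ∏_{k=1}^{N-1}(d_k+1) spanned respectively by the monomials ∏_k σ_k^{j_k} and ∏_k σ_k(s_{kj_k}). Consequently, for any prescribed coefficients λ there exist payoff values u realizing the prescribed multilinear equilibrium equation. -/
import Mathlib


/-- The substitution map sending coefficients of monomials `∏ σ_k^{j_k}` (with
`σ_k^0 = ∑_j σ_k(s_{kj})`, `σ_k^j = σ_k(s_{kj})` for `j ≥ 1`) to coefficients of monomials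
`∏ σ_k(s_{k j_k})`. -/
def substMap (M : ℕ) (d : Fin M → ℕ)
    (lam : ((k : Fin M) → Fin (d k + 1)) → ℝ) :
    ((k : Fin M) → Fin (d k + 1)) → ℝ :=
  fun j' => ∑ j : ((k : Fin M) → Fin (d k + 1)),
    if ∀ k, j k = 0 ∨ j k = j' k then lam j else 0

lemma substLin (M : ℕ) (d : Fin M → ℕ) : IsLinearMap ℝ (substMap M d) := by
  constructor
  · intro x y
    funext j'
    simp only [substMap, Pi.add_apply, ← Finset.sum_add_distrib]
    refine Finset.sum_congr rfl fun j _ => ?_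
    split <;> simp
  · intro c x
    funext j'
    simp only [substMap, Pi.smul_apply, smul_eq_mul, Finset.mul_sum]
    refine Finset.sum_congr rfl fun j _ => ?_
    split <;> simp

lemma substInj (M : ℕ) (d : Fin M → ℕ) : Function.Injective (substMap M d) := by
  have h0 : ∀ lam, substMap M d lam = 0 → lam = 0 := by
    intro lam h
    suffices H : ∀ n (j' : (k : Fin M) → Fin (d k + 1)),
        (Finset.univ.filter (fun k => j' k ≠ 0)).card = n → lam j' = 0 by
      funext j'; exact H _ j' rfl
    intro n
    induction n using Nat.strong_induction_on with
    | _ n ih =>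
      intro j' hn
      have h1 : substMap M d lam j' = 0 := by rw [h]; rfl
      rw [substMap] at h1
      rw [← Finset.sum_filter] at h1
      set F := Finset.univ.filter (fun a : (k : Fin M) → Fin (d k + 1) => ∀ k, a k = 0 ∨ a k = j' k) with hF
      have hj'F : j' ∈ F :=
        Finset.mem_filter.mpr ⟨Finset.mem_univ _, fun k => Or.inr rfl⟩
      rw [← Finset.add_sum_erase F lam hj'F] at h1
      have hz : ∑ j ∈ F.erase j', lam j = 0 := by
        refine Finset.sum_eq_zero fun j hj => ?_
        have hjne : j ≠ j' := (Finset.mem_erase.mp hj).1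
        have hjc : ∀ k, j k = 0 ∨ j k = j' k := by
          have := (Finset.mem_erase.mp hj).2
          simpa [hF] using this
        have hsub : (Finset.univ.filter (fun k => j k ≠ 0)) ⊆
            (Finset.univ.filter (fun k => j' k ≠ 0)) := by
          intro k hk
          simp only [Finset.mem_filter, Finset.mem_univ, true_and] at hk ⊢
          rcases hjc k with h' | h'
          · exact absurd h' hk
          · rw [← h']; exact hk
        have hne : (Finset.univ.filter (fun k => j k ≠ 0)) ≠
            (Finset.univ.filter (fun k => j' k ≠ 0)) := by
          intro heq
          apply hjne
          funext k
          rcases hjc k with h' | h'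
          · have hk : k ∉ Finset.univ.filter (fun k => j k ≠ 0) := by
              simp [h']
            rw [heq] at hk
            simp only [Finset.mem_filter, Finset.mem_univ, true_and, not_not] at hk
            rw [h', hk]
          · exact h'
        have hlt : (Finset.univ.filter (fun k => j k ≠ 0)).card < n := by
          rw [← hn]
          exact Finset.card_lt_card (lt_of_le_of_ne hsub hne)
        exact ih _ hlt j rfl
      rw [hz, add_zero] at h1
      exact h1
  intro x y hxy
  have := h0 (x - y) (by
    have hl := substLin M d
    have : substMap M d (x - y) = substMap M d x - substMap M d y :=
      (IsLinearMap.mk' _ hl).map_sub x y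
    rw [this, hxy, sub_self])
  exact sub_eq_zero.mp this

/-- The substitution map is a linear isomorphism between the two coefficient spaces of
dimension `∏ (d_k + 1)`; consequently, any prescribed coefficients `λ` of a multilinear
equilibrium equation are realized by some payoff values `u`. -/
theorem stmt14 (M : ℕ) (d : Fin M → ℕ) :
    IsLinearMap ℝ (substMap M d) ∧ Function.Bijective (substMap M d) ∧
      ∀ lam : ((k : Fin M) → Fin (d k + 1)) → ℝ, ∃ u, substMap M d u = lam := by
  have hl := substLin M d
  have hi := substInj M d
  have hs : Function.Surjective (substMap M d) := by
    have := LinearMap.injective_iff_surjective (f := IsLinearMap.mk' _ hl)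
    exact this.mp hi
  exact ⟨hl, ⟨hi, hs⟩, fun lam => hs lam⟩
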